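/- Let g: 𝒳 → 𝒴 with 𝒳 ⊆ ℝ^N and 𝒴 ⊆ ℝ^M be a Lipschitz function with Lipschitz constant λ, let X be a random variable on 𝒳 and Y = g(X). Then for every n and every quantization cell value x̂_k, the conditional entropy satisfies H(Ŷ_n | X̂_n = x̂_k) ≤ M log⌈λ√N + 1⌉; consequently lim_{n→∞} H(Ŷ_n | X̂_n)/n = 0. -/

import Mathlib

open MeasureTheory ProbabilityTheory Filter Set
open scoped ENNReal NNReal Topology

noncomputable section

/-- Base-2 entropy of the discrete (atomic) part of a measure. -/
def pmfEntropy {β : Type*} [MeasurableSpace β] (ν : Measure β) : ℝ≥0∞ :=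
  ∑' b : β, ENNReal.ofReal (-((ν {b}).toReal * Real.logb 2 (ν {b}).toReal))

/-- Conditional entropy `H(X | Y)` (of a discretely supported `X`) given `Y`,
computed through the regular conditional distribution of `X` given `Y`. -/
def condEnt {α β γ : Type*} [MeasurableSpace α] [MeasurableSpace β] [StandardBorelSpace β]
    [Nonempty β] [MeasurableSpace γ] (μ : Measure α) [IsFiniteMeasure μ]
    (X : α → β) (Y : α → γ) : ℝ≥0∞ :=
  ∫⁻ y, pmfEntropy (condDistrib X Y μ y) ∂(μ.map Y)

/-- Componentwise uniform quantization `X̂ₙ = ⌊2ⁿ X⌋ / 2ⁿ`. -/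
def quant {ι : Type*} (n : ℕ) (x : ι → ℝ) : ι → ℝ :=
  fun i => (⌊(2 : ℝ) ^ n * x i⌋ : ℝ) / (2 : ℝ) ^ n

/-- `H(X̂ₙ)`, entropy of the quantized input. -/
def entQ {α ι : Type*} [MeasurableSpace α] [Fintype ι] (μ : Measure α)
    (X : α → ι → ℝ) (n : ℕ) : ℝ≥0∞ :=
  pmfEntropy (μ.map fun a => quant n (X a))

/-- `H(X̂ₙ | Y)`. -/
def condEntQ {α ι γ : Type*} [MeasurableSpace α] [Fintype ι] [MeasurableSpace γ]
    (μ : Measure α) [IsFiniteMeasure μ] (X : α → ι → ℝ) (Y : α → γ) (n : ℕ) : ℝ≥0∞ :=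
  condEnt μ (fun a => quant n (X a)) Y

/-- Information loss `L(X→Y) = H(X|Y) = limₙ H(X̂ₙ|Y)`; since the sequence
`H(X̂ₙ|Y)` is nondecreasing in `n` the limit equals the supremum. -/
def infoLoss {α ι γ : Type*} [MeasurableSpace α] [Fintype ι] [MeasurableSpace γ]
    (μ : Measure α) [IsFiniteMeasure μ] (X : α → ι → ℝ) (Y : α → γ) : ℝ≥0∞ :=
  ⨆ n : ℕ, condEntQ μ X Y n

/-- The sequence `H(X̂ₙ|Y)/H(X̂ₙ)` whose limit is the relative information loss. -/
def relLossSeq {α ι γ : Type*} [MeasurableSpace α] [Fintype ι] [MeasurableSpace γ]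
    (μ : Measure α) [IsFiniteMeasure μ] (X : α → ι → ℝ) (Y : α → γ) (n : ℕ) : ℝ :=
  (condEntQ μ X Y n).toReal / (entQ μ X n).toReal

/-- The sequence `I(X̂ₙ;Y)/H(X̂ₙ) = (H(X̂ₙ) - H(X̂ₙ|Y))/H(X̂ₙ)` whose limit is the
relative information transfer. -/
def relTransSeq {α ι γ : Type*} [MeasurableSpace α] [Fintype ι] [MeasurableSpace γ]
    (μ : Measure α) [IsFiniteMeasure μ] (X : α → ι → ℝ) (Y : α → γ) (n : ℕ) : ℝ :=
  ((entQ μ X n).toReal - (condEntQ μ X Y n).toReal) / (entQ μ X n).toReal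

/-- `H(ν̂ₙ)` for a measure on `ℝᴺ` (quantized entropy of a distribution). -/
def entQM {ι : Type*} [Fintype ι] (ν : Measure (ι → ℝ)) (n : ℕ) : ℝ≥0∞ :=
  pmfEntropy (ν.map (quant n))

/-! Two points in the same quantization cell are at Euclidean distance at most `√N / 2ⁿ`, so their
images under `g` differ by at most `λ√N / 2ⁿ` in each output coordinate. Hence on a cell each
coordinate of `2ⁿ Y` ranges over an interval of length `λ√N`, which meets at most `⌈λ√N + 1⌉`
integer cells, and `Ŷₙ` takes at most `⌈λ√N + 1⌉ᴹ` values there. A distribution on `k` atoms has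
entropy at most `log k`; averaging over the cells bounds `H(Ŷₙ | X̂ₙ)` uniformly in `n`. -/

lemma sum_negMulLog_le_log_card {β : Type*} {S : Finset β} {p : β → ℝ}
    (hp : ∀ b ∈ S, 0 ≤ p b) (hsum : ∑ b ∈ S, p b = 1) :
    ∑ b ∈ S, Real.negMulLog (p b) ≤ Real.log S.card := by
  have hS : (0 : ℝ) < S.card := by
    exact_mod_cast (Finset.nonempty_of_sum_ne_zero (hsum ▸ one_ne_zero)).card_pos
  have hJensen := Real.concaveOn_negMulLog.le_map_sum (t := S) (w := fun _ => (S.card : ℝ)⁻¹)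
    (fun _ _ => by positivity) (by simp [hS.ne']) (fun b hb => Set.mem_Ici.2 (hp b hb))
  have hUniform : Real.negMulLog (S.card : ℝ)⁻¹ = (S.card : ℝ)⁻¹ * Real.log S.card := by
    simp [Real.negMulLog, Real.log_inv]
  simp only [smul_eq_mul, ← Finset.mul_sum, hsum, mul_one, hUniform] at hJensen
  exact le_of_mul_le_mul_left hJensen (inv_pos.2 hS)

lemma pmfEntropy_le_logb_card {β : Type*} [MeasurableSpace β] [MeasurableSingletonClass β]
    (ν : Measure β) [IsZeroOrProbabilityMeasure ν] (S : Finset β) (hS : ∀ᵐ b ∂ν, b ∈ S) :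
    pmfEntropy ν ≤ ENNReal.ofReal (Real.logb 2 S.card) := by
  rcases eq_zero_or_isProbabilityMeasure ν with rfl | _
  · simp [pmfEntropy]
  have hout : ∀ b ∉ S, ν {b} = 0 := fun b hb =>
    measure_mono_null (Set.singleton_subset_iff.2 hb) (ae_iff.1 hS)
  have hsum : ∑ b ∈ S, (ν {b}).toReal = 1 := by
    rw [← ENNReal.toReal_sum fun b _ => measure_ne_top ν _, sum_measure_singleton,
      (prob_compl_eq_zero_iff S.measurableSet).1 (ae_iff.1 hS), ENNReal.toReal_one]
  have hterm : ∀ b, -((ν {b}).toReal * Real.logb 2 (ν {b}).toReal)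
      = Real.negMulLog (ν {b}).toReal / Real.log 2 := fun b => by
    rw [Real.negMulLog, Real.logb]; ring
  have hterm_nonneg : ∀ b, 0 ≤ -((ν {b}).toReal * Real.logb 2 (ν {b}).toReal) := fun b =>
    hterm b ▸ div_nonneg (Real.negMulLog_nonneg ENNReal.toReal_nonneg measureReal_le_one)
      (Real.log_nonneg one_le_two)
  rw [pmfEntropy, tsum_eq_sum (s := S) fun b hb => by simp [hout b hb],
    ← ENNReal.ofReal_sum_of_nonneg fun b _ => hterm_nonneg b]
  gcongr
  rw [Finset.sum_congr rfl fun b _ => hterm b, ← Finset.sum_div, Real.logb]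
  gcongr
  exact sum_negMulLog_le_log_card (fun _ _ => ENNReal.toReal_nonneg) hsum

lemma measurable_quant {ι : Type*} (n : ℕ) : Measurable (quant (ι := ι) n) :=
  measurable_pi_lambda _ fun i =>
    (measurable_from_top.comp ((measurable_const.mul (measurable_pi_apply i)).floor)).div_const _

lemma abs_sub_lt_of_quant_eq {ι : Type*} {n : ℕ} {x y : ι → ℝ} (h : quant n x = quant n y)
    (i : ι) : |x i - y i| < 1 / 2 ^ n := by
  have hfloor : ⌊(2 : ℝ) ^ n * x i⌋ = ⌊(2 : ℝ) ^ n * y i⌋ := by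
    exact_mod_cast (div_left_inj' (pow_ne_zero n two_ne_zero)).1 (congrFun h i)
  have := Int.abs_sub_lt_one_of_floor_eq_floor hfloor
  rw [← mul_sub, abs_mul, abs_of_pos (by positivity)] at this
  exact (lt_div_iff₀' (by positivity)).2 this

lemma sqrt_sum_sq_sub_le_of_quant_eq {ι : Type*} [Fintype ι] {n : ℕ} {x y : ι → ℝ}
    (h : quant n x = quant n y) :
    √(∑ i, (x i - y i) ^ 2) ≤ √(Fintype.card ι) / 2 ^ n := by
  have hsum : ∑ i, (x i - y i) ^ 2 ≤ Fintype.card ι * (1 / 2 ^ n) ^ 2 := by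
    calc ∑ i, (x i - y i) ^ 2 ≤ ∑ _i : ι, (1 / (2 : ℝ) ^ n) ^ 2 :=
          Finset.sum_le_sum fun i _ => by
            rw [← sq_abs]; exact pow_le_pow_left₀ (abs_nonneg _) (abs_sub_lt_of_quant_eq h i).le 2
      _ = Fintype.card ι * (1 / 2 ^ n) ^ 2 := by simp
  calc √(∑ i, (x i - y i) ^ 2) ≤ √(Fintype.card ι * (1 / 2 ^ n) ^ 2) := Real.sqrt_le_sqrt hsum
    _ = √(Fintype.card ι) / 2 ^ n := by
      rw [Real.sqrt_mul (Nat.cast_nonneg _), Real.sqrt_sq (by positivity)]; ring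

lemma abs_le_sqrt_sum_sq {κ : Type*} [Fintype κ] (v : κ → ℝ) (j : κ) :
    |v j| ≤ √(∑ j, v j ^ 2) :=
  Real.abs_le_sqrt (Finset.single_le_sum (fun j _ => sq_nonneg (v j)) (Finset.mem_univ j))

lemma sub_le_of_quant_eq_of_lipschitz {ι κ : Type*} [Fintype ι] [Fintype κ]
    {g : (ι → ℝ) → κ → ℝ} {s : Set (ι → ℝ)} {lam : ℝ} (hlam : 0 ≤ lam)
    (hLip : ∀ x ∈ s, ∀ y ∈ s,
      √(∑ j, (g x j - g y j) ^ 2) ≤ lam * √(∑ i, (x i - y i) ^ 2))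
    {n : ℕ} {x y : ι → ℝ} (hx : x ∈ s) (hy : y ∈ s) (h : quant n x = quant n y) (j : κ) :
    2 ^ n * g x j - 2 ^ n * g y j ≤ lam * √(Fintype.card ι) := by
  have hg : |g x j - g y j| ≤ lam * (√(Fintype.card ι) / 2 ^ n) :=
    (abs_le_sqrt_sum_sq (fun j => g x j - g y j) j).trans
      ((hLip x hx y hy).trans (mul_le_mul_of_nonneg_left (sqrt_sum_sq_sub_le_of_quant_eq h) hlam))
  calc 2 ^ n * g x j - 2 ^ n * g y j ≤ 2 ^ n * |g x j - g y j| := by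
        rw [← mul_sub]; exact mul_le_mul_of_nonneg_left (le_abs_self _) (by positivity)
    _ ≤ 2 ^ n * (lam * (√(Fintype.card ι) / 2 ^ n)) := by gcongr
    _ = lam * √(Fintype.card ι) := by field_simp

lemma exists_floor_mem_Ico {T : Set ℝ} {L : ℝ} (hT : ∀ t ∈ T, ∀ t' ∈ T, t - t' ≤ L) :
    ∃ m : ℤ, ∀ t ∈ T, ⌊t⌋ ∈ Finset.Ico m (m + ⌈L + 1⌉₊) := by
  rcases T.eq_empty_or_nonempty with rfl | ⟨t₀, ht₀⟩
  · exact ⟨0, by simp⟩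
  have hbdd : BddBelow T := ⟨t₀ - L, fun t ht => by linarith [hT t₀ ht₀ t ht]⟩
  refine ⟨⌊sInf T⌋, fun t ht => Finset.mem_Ico.2 ⟨Int.floor_mono (csInf_le hbdd ht), ?_⟩⟩
  have hinf : t - L ≤ sInf T := le_csInf ⟨t₀, ht₀⟩ fun t' ht' => by linarith [hT t ht t' ht']
  rw [← Int.cast_lt (R := ℝ)]
  push_cast
  linarith [Int.floor_le t, Int.lt_floor_add_one (sInf T), Nat.le_ceil (L + 1)]

lemma exists_finset_quant_mem {κ : Type*} [Fintype κ] (n : ℕ) {T : Set (κ → ℝ)} {L : ℝ}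
    (hT : ∀ y ∈ T, ∀ y' ∈ T, ∀ j, 2 ^ n * y j - 2 ^ n * y' j ≤ L) :
    ∃ S : Finset (κ → ℝ), S.card ≤ ⌈L + 1⌉₊ ^ Fintype.card κ ∧ ∀ y ∈ T, quant n y ∈ S := by
  classical
  choose m hm using fun j => exists_floor_mem_Ico (T := (fun y => 2 ^ n * y j) '' T) (L := L)
    (by rintro _ ⟨y, hy, rfl⟩ _ ⟨y', hy', rfl⟩; exact hT y hy y' hy' j)
  refine ⟨Fintype.piFinset fun j =>
    (Finset.Ico (m j) (m j + ⌈L + 1⌉₊)).image fun k : ℤ => (k : ℝ) / 2 ^ n, ?_, ?_⟩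
  · rw [Fintype.card_piFinset]
    calc ∏ j, ((Finset.Ico (m j) (m j + ⌈L + 1⌉₊)).image fun k : ℤ => (k : ℝ) / 2 ^ n).card
        ≤ ∏ _j : κ, ⌈L + 1⌉₊ := Finset.prod_le_prod' fun j _ => Finset.card_image_le.trans (by simp)
      _ = ⌈L + 1⌉₊ ^ Fintype.card κ := by simp
  · intro y hy
    rw [Fintype.mem_piFinset]
    exact fun j => Finset.mem_image_of_mem _ (hm j _ ⟨y, hy, rfl⟩)

lemma logb_natCast_le_logb_natCast {a b : ℕ} (h : a ≤ b) :
    Real.logb 2 a ≤ Real.logb 2 b := by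
  rcases a.eq_zero_or_pos with rfl | ha
  · simpa [Real.logb] using div_nonneg (Real.log_natCast_nonneg b) (Real.log_nonneg one_le_two)
  exact Real.logb_le_logb_of_le one_lt_two (by exact_mod_cast ha) (by exact_mod_cast h)

lemma pmfEntropy_map_cond_quant_le_of_lipschitz {α ι κ : Type*} [MeasurableSpace α] [Fintype ι]
    [Fintype κ] (μ : Measure α) {X : α → ι → ℝ} {g : (ι → ℝ) → κ → ℝ} {s : Set (ι → ℝ)}
    (hX : Measurable X) (hg : Measurable g) (hXs : ∀ a, X a ∈ s) {lam : ℝ} (hlam : 0 ≤ lam)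
    (hLip : ∀ x ∈ s, ∀ y ∈ s,
      √(∑ j, (g x j - g y j) ^ 2) ≤ lam * √(∑ i, (x i - y i) ^ 2))
    (n : ℕ) (xh : ι → ℝ) :
    pmfEntropy ((μ[|(fun a => quant n (X a)) ⁻¹' {xh}]).map fun a => quant n (g (X a))) ≤
      ENNReal.ofReal ((Fintype.card κ : ℝ) *
        Real.logb 2 (⌈lam * √(Fintype.card ι) + 1⌉₊ : ℝ)) := by
  set E := (fun a => quant n (X a)) ⁻¹' {xh}
  obtain ⟨S, hcard, hS⟩ := exists_finset_quant_mem n (T := (fun a => g (X a)) '' E)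
    (L := lam * √(Fintype.card ι)) (by
      rintro _ ⟨a, ha, rfl⟩ _ ⟨a', ha', rfl⟩
      exact sub_le_of_quant_eq_of_lipschitz hlam hLip (hXs a) (hXs a') (ha.trans ha'.symm))
  have hE : MeasurableSet E := (measurable_quant n).comp hX (measurableSet_singleton xh)
  have hY : Measurable fun a => quant n (g (X a)) := (measurable_quant n).comp (hg.comp hX)
  refine (pmfEntropy_le_logb_card _ S ?_).trans (ENNReal.ofReal_le_ofReal ?_)
  · rw [ae_map_iff hY.aemeasurable (p := (· ∈ S)) S.measurableSet]
    exact ae_cond_of_forall_mem hE fun a ha => hS _ ⟨a, ha, rfl⟩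
  · calc Real.logb 2 S.card
        ≤ Real.logb 2 (⌈lam * √(Fintype.card ι) + 1⌉₊ ^ Fintype.card κ : ℕ) :=
          logb_natCast_le_logb_natCast hcard
      _ = _ := by push_cast; rw [Real.logb_pow]

lemma condDistrib_eq_cond_map {α β Ω : Type*} [MeasurableSpace α] [MeasurableSpace β]
    [MeasurableSingletonClass β] [MeasurableSpace Ω] [StandardBorelSpace Ω] [Nonempty Ω]
    {μ : Measure α} [IsFiniteMeasure μ] {X : α → β} {Y : α → Ω}
    (hX : Measurable X) (hY : Measurable Y) (x : β) (hx : μ.map X {x} ≠ 0) :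
    condDistrib Y X μ x = (μ[|X ⁻¹' {x}]).map Y := by
  ext s hs
  rw [condDistrib_apply_of_ne_zero hY x hx s, Measure.map_apply hY hs,
    cond_apply (hX (measurableSet_singleton x)), Measure.map_apply hX (measurableSet_singleton x),
    Measure.map_apply (hX.prodMk hY) ((measurableSet_singleton x).prod hs)]
  rfl

lemma ae_measure_singleton_ne_zero {β : Type*} [MeasurableSpace β] [MeasurableSingletonClass β]
    {ν : Measure β} {D : Set β} (hD : D.Countable) (hνD : ∀ᵐ x ∂ν, x ∈ D) :
    ∀ᵐ x ∂ν, ν {x} ≠ 0 := by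
  have hatoms : ∀ᵐ x ∂ν, ∀ d ∈ D ∩ {d | ν {d} = 0}, x ∉ ({d} : Set β) :=
    (ae_ball_iff (hD.mono Set.inter_subset_left)).2 fun d hd =>
      measure_eq_zero_iff_ae_notMem.1 hd.2
  filter_upwards [hνD, hatoms] with x hx hne h0 using hne x ⟨hx, h0⟩ rfl

lemma condEnt_le_of_forall_pmfEntropy_cond_le {α β Ω : Type*} [MeasurableSpace α]
    [MeasurableSpace β] [MeasurableSingletonClass β] [MeasurableSpace Ω] [StandardBorelSpace Ω]
    [Nonempty Ω] (μ : Measure α) [IsProbabilityMeasure μ] {X : α → β} {Y : α → Ω}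
    (hX : Measurable X) (hY : Measurable Y) (hXc : (Set.range X).Countable) {C : ℝ≥0∞}
    (h : ∀ x, pmfEntropy ((μ[|X ⁻¹' {x}]).map Y) ≤ C) :
    condEnt μ Y X ≤ C := by
  have hae : ∀ᵐ x ∂μ.map X, μ.map X {x} ≠ 0 :=
    ae_measure_singleton_ne_zero hXc (ae_map_mem_range X hXc.measurableSet μ)
  have : IsProbabilityMeasure (μ.map X) := Measure.isProbabilityMeasure_map hX.aemeasurable
  calc condEnt μ Y X = ∫⁻ x, pmfEntropy (condDistrib Y X μ x) ∂μ.map X := rfl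
    _ ≤ ∫⁻ _, C ∂μ.map X :=
      lintegral_mono_ae (hae.mono fun x hx => condDistrib_eq_cond_map hX hY x hx ▸ h x)
    _ = C := by simp

lemma countable_range_quant {ι : Type*} [Finite ι] (n : ℕ) :
    (Set.range (quant (ι := ι) n)).Countable :=
  (Set.countable_range fun v : ι → ℤ => fun i => (v i : ℝ) / 2 ^ n).mono
    (by rintro _ ⟨x, rfl⟩; exact ⟨fun i => ⌊(2 : ℝ) ^ n * x i⌋, rfl⟩)

lemma tendsto_div_natCast_nhds_zero_of_le {u : ℕ → ℝ≥0∞} {C : ℝ≥0∞} (hu : ∀ n, u n ≤ C)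
    (hC : C ≠ ⊤) :
    Tendsto (fun n => u n / n) atTop (𝓝 0) := by
  have hCn : Tendsto (fun n : ℕ => C / n) atTop (𝓝 0) := by
    simpa [ENNReal.div_eq_inv_mul, mul_comm] using
      ENNReal.Tendsto.const_mul ENNReal.tendsto_inv_nat_nhds_zero (Or.inr hC)
  exact tendsto_of_tendsto_of_tendsto_of_le_of_le tendsto_const_nhds hCn (fun n => zero_le)
    fun n => ENNReal.div_le_div_right (hu n) _

/-- **Lipschitz functions: conditional output entropy of quantizations.**
If `g : 𝒳 → 𝒴` (`𝒳 ⊆ ℝᴺ`, `𝒴 ⊆ ℝᴹ`) is Lipschitz with constant `λ` (w.r.t. the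
Euclidean metrics) and `Y = g(X)`, then for every `n` and every quantization cell
value `x̂` one has `H(Ŷₙ | X̂ₙ = x̂) ≤ M · log₂⌈λ√N + 1⌉`, and consequently
`limₙ H(Ŷₙ|X̂ₙ)/n = 0`. -/
theorem condEnt_quant_le_of_lipschitz
    {α ι κ : Type*} [MeasurableSpace α] [Fintype ι] [Fintype κ]
    (μ : Measure α) [IsProbabilityMeasure μ]
    (X : α → ι → ℝ) (g : (ι → ℝ) → κ → ℝ) (s : Set (ι → ℝ))
    (hX : Measurable X) (hg : Measurable g) (hXs : ∀ a, X a ∈ s)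
    (lam : ℝ) (hlam : 0 ≤ lam)
    (hLip : ∀ x ∈ s, ∀ y ∈ s,
      Real.sqrt (∑ j, (g x j - g y j) ^ 2) ≤ lam * Real.sqrt (∑ i, (x i - y i) ^ 2)) :
    (∀ n : ℕ, ∀ xh : ι → ℝ,
      pmfEntropy ((μ[|(fun a => quant n (X a)) ⁻¹' {xh}]).map
          (fun a => quant n (g (X a)))) ≤
        ENNReal.ofReal ((Fintype.card κ : ℝ) *
          Real.logb 2 (⌈lam * Real.sqrt (Fintype.card ι) + 1⌉₊ : ℝ))) ∧
    Tendsto (fun n : ℕ =>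
        condEnt μ (fun a => quant n (g (X a))) (fun a => quant n (X a)) / (n : ℝ≥0∞))
      atTop (𝓝 0) := by
  have hcell := pmfEntropy_map_cond_quant_le_of_lipschitz μ hX hg hXs hlam hLip
  have hbound n := condEnt_le_of_forall_pmfEntropy_cond_le μ ((measurable_quant n).comp hX)
    ((measurable_quant n).comp (hg.comp hX))
    ((countable_range_quant n).mono (Set.range_comp_subset_range _ _)) (hcell n)
  exact ⟨hcell, tendsto_div_natCast_nhds_zero_of_le hbound ENNReal.ofReal_ne_top⟩
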